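/- arXiv:0810.3892 — 3 statements merged into one kernel-verified Lean document; each statement's English description precedes it below -/
import Mathlib

section
/- For the weighted Laplacian A_n of the complete graph Kₙ with symmetric weights w_{ij}, the principal minor det(Ã_n), where Ã_n is A_n with the first row and first column deleted, equals the spanning-tree polynomial T_n(w) = Σ_{trees t on {1,...,n}} Π_{{i,j}∈E(t)} w_{ij}. -/
open Finset

/-- The weighted Laplacian matrix of the complete graph `Kₙ`:
off-diagonal entries `-w i j`, diagonal entries `Σ_{k ≠ i} w i k`. -/
noncomputable def lap (n : ℕ) (w : Fin n → Fin n → ℂ) : Matrix (Fin n) (Fin n) ℂ :=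
  fun i j => if i = j then ∑ k ∈ univ.erase i, w i k else -w i j

open scoped Classical in
/-- The spanning-tree polynomial `T_n(w) = Σ_{trees t on {1,…,n}} Π_{edges {i,j} of t} w i j`. -/
noncomputable def treePoly (n : ℕ) (w : Fin n → Fin n → ℂ) : ℂ :=
  ∑ t ∈ univ.filter (fun t : SimpleGraph (Fin n) => t.IsTree),
    ∏ p ∈ univ.filter (fun p : Fin n × Fin n => p.1 < p.2 ∧ t.Adj p.1 p.2), w p.1 p.2

/-!
Expanding row `i` of the reduced Laplacian as `∑ₖ w i k • (eᵢ - eₖ)`, with `e₀ = 0`, and using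
multilinearity of the determinant, the minor becomes a sum over all parent functions `f`, which
send each non-root vertex `i` to some `f i`, of `∏ᵢ w i (f i) * det (1 - P_f)`; here `P_f` is the
adjacency matrix of the functional graph of `f` on the non-root vertices. If iterating `f` drives
every vertex to the root `0`, then `P_f` is nilpotent and the determinant is `1`. Otherwise `f`
has a cycle avoiding the root, whose indicator vector is fixed by `P_f`, and the determinant is
`0`. Finally, the parent functions that reach the root are in bijection with the spanning trees
(orient every edge towards `0`), and the weights agree.
-/

namespace Function

variable {α : Type*} {g : α → α} {r : α}

theorem iterate_eq_of_le (hr : g r = r) {x : α} {m N : ℕ} (hm : g^[m] x = r) (hN : m ≤ N) :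
    g^[N] x = r := by
  rw [← Nat.sub_add_cancel hN, iterate_add_apply, hm, iterate_fixed hr]

theorem exists_iterate_eq_of_forall_exists_iterate_eq [Finite α] (hr : g r = r)
    (h : ∀ x, ∃ m, g^[m] x = r) : ∃ N, ∀ x, g^[N] x = r := by
  have := Fintype.ofFinite α
  choose m hm using h
  exact ⟨∑ x, m x, fun x ↦ iterate_eq_of_le hr (hm x) (Finset.single_le_sum (by simp) (mem_univ x))⟩

theorem eq_of_mem_periodicPts_of_iterate_eq (hr : g r = r) {x : α} (hx : x ∈ periodicPts g)
    {m : ℕ} (hm : g^[m] x = r) : x = r := by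
  obtain ⟨p, hp, hpx⟩ := hx
  exact (hpx.mul_const m).eq.symm.trans (iterate_eq_of_le hr hm (Nat.le_mul_of_pos_left m hp))

theorem exists_iterate_mem_periodicPts [Finite α] (g : α → α) (x : α) :
    ∃ m, g^[m] x ∈ periodicPts g := by
  obtain ⟨a, b, hne, heq⟩ := Finite.exists_ne_map_eq_of_infinite fun m : ℕ ↦ g^[m] x
  wlog hab : a < b generalizing a b
  · exact this b a hne.symm heq.symm (by omega)
  refine ⟨a, mk_mem_periodicPts (n := b - a) (by omega) ?_⟩
  rw [IsPeriodicPt, IsFixedPt, ← iterate_add_apply, Nat.sub_add_cancel hab.le]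
  exact heq.symm

theorem exists_iterate_eq_of_measure_lt (μ : α → ℕ) (h : ∀ x ≠ r, μ (g x) < μ x) (x : α) :
    ∃ m, g^[m] x = r := by
  induction hμ : μ x using Nat.strong_induction_on generalizing x with
  | _ k ih =>
    by_cases hx : x = r
    · exact ⟨0, hx⟩
    · obtain ⟨m, hm⟩ := ih _ (hμ ▸ h x hx) (g x) rfl
      exact ⟨m + 1, hm⟩

end Function

namespace SimpleGraph

variable {V : Type*} {G : SimpleGraph V}

theorem Connected.exists_adj_dist_lt (hG : G.Connected) {x r : V} (hx : x ≠ r) :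
    ∃ y, G.Adj x y ∧ G.dist y r < G.dist x r := by
  obtain ⟨p, hp⟩ := hG.exists_walk_length_eq_dist x r
  cases p with
  | nil => exact absurd rfl hx
  | cons h q => exact ⟨_, h, (dist_le q).trans_lt (by simp at hp; omega)⟩

theorem prod_filter_lt_adj_eq_prod_edgeFinset {M : Type*} [CommMonoid M] [LinearOrder V]
    [Fintype V] [DecidableRel G.Adj] [Fintype G.edgeSet] (w : V → V → M)
    (hw : ∀ a b, w a b = w b a) :
    ∏ p ∈ univ.filter (fun p : V × V ↦ p.1 < p.2 ∧ G.Adj p.1 p.2), w p.1 p.2 =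
      ∏ e ∈ G.edgeFinset, Sym2.lift ⟨w, hw⟩ e := by
  refine prod_nbij (fun p ↦ s(p.1, p.2)) ?_ ?_ ?_ (fun _ _ ↦ rfl)
  · intro p hp
    simpa using (mem_filter.mp hp).2.2
  · rintro ⟨a, b⟩ hab ⟨c, d⟩ hcd h
    simp only [coe_filter, mem_univ, true_and, Set.mem_ofPred_eq] at hab hcd
    rcases Sym2.eq_iff.mp h with ⟨rfl, rfl⟩ | ⟨rfl, rfl⟩
    · rfl
    · exact absurd hab.1 hcd.1.not_gt
  · intro e he
    induction e using Sym2.ind with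
    | _ a b =>
      have hab : G.Adj a b := by simpa using he
      rcases hab.ne.lt_or_gt with h | h
      · exact ⟨(a, b), by simp [h, hab], rfl⟩
      · exact ⟨(b, a), by simp [h, hab.symm], Sym2.eq_swap⟩

end SimpleGraph

theorem Matrix.det_one_sub_of_isNilpotent {R ι : Type*} [CommRing R] [IsDomain R] [Fintype ι]
    [DecidableEq ι] {N : Matrix ι ι R} (hN : IsNilpotent N) : (1 - N).det = 1 := by
  have hchar : N.charpoly = Polynomial.X ^ Fintype.card ι :=
    sub_eq_zero.mp (IsReduced.eq_zero _ (isNilpotent_charpoly_sub_pow_of_isNilpotent hN))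
  simpa [hchar] using (N.eval_charpoly 1).symm

section ParentFunction

variable {n : ℕ} {f : Fin n → Fin (n + 1)}

def parentMap (f : Fin n → Fin (n + 1)) : Fin (n + 1) → Fin (n + 1) :=
  Fin.cases 0 f

@[simp] theorem parentMap_zero (f : Fin n → Fin (n + 1)) : parentMap f 0 = 0 := rfl

@[simp] theorem parentMap_succ (f : Fin n → Fin (n + 1)) (i : Fin n) :
    parentMap f i.succ = f i := rfl

def ReachesRoot (f : Fin n → Fin (n + 1)) : Prop :=
  ∀ x, ∃ m, (parentMap f)^[m] x = 0

theorem ReachesRoot.iterate_ne_self (hf : ReachesRoot f) {x : Fin (n + 1)} (hx : x ≠ 0)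
    {p : ℕ} (hp : 0 < p) : (parentMap f)^[p] x ≠ x := fun hpx ↦
  have ⟨_, hm⟩ := hf x
  hx (Function.eq_of_mem_periodicPts_of_iterate_eq rfl (Function.mk_mem_periodicPts hp hpx) hm)

variable (R : Type*)

def parentMatrix [Zero R] [One R] (f : Fin n → Fin (n + 1)) : Matrix (Fin n) (Fin n) R :=
  Matrix.of fun i j ↦ if f i = j.succ then 1 else 0

theorem parentMatrix_pow_apply [Semiring R] (f : Fin n → Fin (n + 1)) (k : ℕ) (i j : Fin n) :
    (parentMatrix R f ^ k) i j = if (parentMap f)^[k] i.succ = j.succ then 1 else 0 := by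
  induction k generalizing i with
  | zero => simp [Matrix.one_apply]
  | succ k ih =>
    rw [pow_succ', Matrix.mul_apply, Function.iterate_succ_apply, parentMap_succ]
    simp_rw [ih]
    simp only [parentMatrix, Matrix.of_apply, ite_mul, one_mul, zero_mul]
    cases f i using Fin.cases with
    | zero =>
      have h0 (x : Fin n) : (0 : Fin (n + 1)) ≠ x.succ := (Fin.succ_ne_zero x).symm
      simp [Function.iterate_fixed (parentMap_zero f), h0]
    | succ y => simp [Fin.succ_inj]

variable {R}

theorem ReachesRoot.isNilpotent_parentMatrix [Semiring R] (hf : ReachesRoot f) :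
    IsNilpotent (parentMatrix R f) := by
  obtain ⟨N, hN⟩ := Function.exists_iterate_eq_of_forall_exists_iterate_eq (parentMap_zero f) hf
  refine ⟨N, Matrix.ext fun i j ↦ ?_⟩
  simp [parentMatrix_pow_apply, hN, (Fin.succ_ne_zero j).symm]

theorem vecMul_parentMatrix_indicator_periodicPts [Semiring R] (f : Fin n → Fin (n + 1))
    [DecidablePred (· ∈ Function.periodicPts (parentMap f))] :
    Matrix.vecMul (fun i ↦ if i.succ ∈ Function.periodicPts (parentMap f) then 1 else 0)
      (parentMatrix R f) =
      fun i ↦ if i.succ ∈ Function.periodicPts (parentMap f) then 1 else 0 := by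
  funext j
  set S := (Function.periodicPts (parentMap f)).toFinset
  have hbij : Set.BijOn (parentMap f) S S := by
    simpa [S] using Function.bijOn_periodicPts (parentMap f)
  calc ∑ i, (if i.succ ∈ Function.periodicPts (parentMap f) then 1 else 0) * parentMatrix R f i j
      = ∑ x, (if x ∈ Function.periodicPts (parentMap f) then 1 else 0) *
          (if parentMap f x = j.succ then (1 : R) else 0) := by
        rw [Fin.sum_univ_succ]
        simp only [parentMatrix, Matrix.of_apply, parentMap_zero, parentMap_succ,
          (Fin.succ_ne_zero j).symm, if_false, mul_zero, zero_add]
        rfl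
    _ = ∑ x ∈ S, (if parentMap f x = j.succ then (1 : R) else 0) := by
        simp_rw [ite_mul, one_mul, zero_mul]
        rw [← sum_filter, Set.filter_mem_univ_eq_toFinset]
    _ = ∑ x ∈ S, (if x = j.succ then (1 : R) else 0) :=
        sum_nbij (parentMap f) hbij.mapsTo hbij.injOn hbij.surjOn (fun _ _ ↦ rfl)
    _ = _ := by simp [S]

theorem det_one_sub_parentMatrix_of_not_reachesRoot [CommRing R] [IsDomain R]
    (hf : ¬ReachesRoot f) : (1 - parentMatrix R f).det = 0 := by
  classical
  obtain ⟨x, hx⟩ := not_forall.mp hf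
  obtain ⟨m, hm⟩ := Function.exists_iterate_mem_periodicPts (parentMap f) x
  have hm0 : (parentMap f)^[m] x ≠ 0 := fun h ↦ hx ⟨m, h⟩
  rw [← Matrix.exists_vecMul_eq_zero_iff]
  refine ⟨_, fun h ↦ ?_, by
    rw [Matrix.vecMul_sub, Matrix.vecMul_one, vecMul_parentMatrix_indicator_periodicPts, sub_self]⟩
  simpa [hm] using congrFun h (((parentMap f)^[m] x).pred hm0)

theorem det_one_sub_parentMatrix [CommRing R] [IsDomain R] (f : Fin n → Fin (n + 1))
    [Decidable (ReachesRoot f)] :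
    (1 - parentMatrix R f).det = if ReachesRoot f then 1 else 0 := by
  split_ifs with hf
  · exact Matrix.det_one_sub_of_isNilpotent hf.isNilpotent_parentMatrix
  · exact det_one_sub_parentMatrix_of_not_reachesRoot hf

end ParentFunction

section ParentGraph

open SimpleGraph

variable {n : ℕ} {f : Fin n → Fin (n + 1)}

def parentGraph (f : Fin n → Fin (n + 1)) : SimpleGraph (Fin (n + 1)) :=
  fromEdgeSet (Set.range fun i ↦ s(i.succ, f i))

theorem parentMap_eq_or_of_adj {x y : Fin (n + 1)} (h : (parentGraph f).Adj x y) :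
    parentMap f x = y ∨ parentMap f y = x := by
  obtain ⟨⟨i, hi⟩, -⟩ := h
  rcases Sym2.eq_iff.mp hi with ⟨rfl, rfl⟩ | ⟨rfl, rfl⟩
  · exact Or.inl rfl
  · exact Or.inr rfl

theorem ReachesRoot.adj_parentMap (hf : ReachesRoot f) {x : Fin (n + 1)} (hx : x ≠ 0) :
    (parentGraph f).Adj x (parentMap f x) := by
  obtain ⟨i, rfl⟩ := Fin.exists_succ_eq.mpr hx
  exact ⟨⟨i, rfl⟩, (hf.iterate_ne_self hx one_pos).symm⟩

theorem ReachesRoot.connected_parentGraph (hf : ReachesRoot f) : (parentGraph f).Connected := by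
  have hreach (m : ℕ) (x : Fin (n + 1)) (hm : (parentMap f)^[m] x = 0) :
      (parentGraph f).Reachable x 0 := by
    induction m generalizing x with
    | zero => exact hm ▸ Reachable.refl x
    | succ m ih =>
      rcases eq_or_ne x 0 with rfl | hx
      · exact Reachable.refl 0
      · exact (hf.adj_parentMap hx).reachable.trans (ih _ hm)
  have : Nonempty (Fin (n + 1)) := ⟨0⟩
  exact .mk fun x y ↦
    have ⟨m, hm⟩ := hf x; have ⟨m', hm'⟩ := hf y; (hreach m x hm).trans (hreach m' y hm').symm

theorem ReachesRoot.injective_parentEdge (hf : ReachesRoot f) :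
    Function.Injective fun i ↦ s(i.succ, f i) := by
  intro i j hij
  rcases Sym2.eq_iff.mp hij with ⟨h, -⟩ | ⟨hi, hj⟩
  · exact Fin.succ_injective _ h
  · refine absurd ?_ (hf.iterate_ne_self (Fin.succ_ne_zero i) two_pos)
    change parentMap f (parentMap f i.succ) = i.succ
    rw [parentMap_succ, hj, parentMap_succ, hi]

theorem ReachesRoot.edgeSet_parentGraph (hf : ReachesRoot f) :
    (parentGraph f).edgeSet = Set.range fun i ↦ s(i.succ, f i) := by
  refine (edgeSet_eq_iff _ _).mpr ⟨rfl, Set.disjoint_left.mpr ?_⟩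
  rintro _ ⟨i, rfl⟩ hdiag
  exact hf.iterate_ne_self (Fin.succ_ne_zero i) one_pos (Sym2.mk_isDiag_iff.mp hdiag).symm

theorem ReachesRoot.isTree_parentGraph (hf : ReachesRoot f) : (parentGraph f).IsTree := by
  rw [isTree_iff_connected_and_card, hf.edgeSet_parentGraph,
    Nat.card_range_of_injective hf.injective_parentEdge]
  exact ⟨hf.connected_parentGraph, by simp⟩

theorem ReachesRoot.prod_edgeFinset_parentGraph {M : Type*} [CommMonoid M] (hf : ReachesRoot f)
    [Fintype (parentGraph f).edgeSet] (w : Fin (n + 1) → Fin (n + 1) → M)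
    (hw : ∀ a b, w a b = w b a) :
    ∏ e ∈ (parentGraph f).edgeFinset, Sym2.lift ⟨w, hw⟩ e = ∏ i, w i.succ (f i) := by
  classical
  have : (parentGraph f).edgeFinset = univ.image fun i ↦ s(i.succ, f i) := by
    rw [← coe_inj, coe_edgeFinset, coe_image, coe_univ, Set.image_univ, hf.edgeSet_parentGraph]
  rw [this, prod_image fun i _ j _ h ↦ hf.injective_parentEdge h]
  rfl

theorem ReachesRoot.eq_of_parentGraph_eq {f' : Fin n → Fin (n + 1)} (hf : ReachesRoot f)
    (h : parentGraph f = parentGraph f') : f = f' := by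
  suffices H : ∀ m x, (parentMap f)^[m] x = 0 → parentMap f' x = parentMap f x by
    funext i
    obtain ⟨m, hm⟩ := hf i.succ
    exact (H m _ hm).symm
  intro m
  induction m with
  | zero => rintro x rfl; rfl
  | succ m ih =>
    intro x hx
    rcases eq_or_ne x 0 with rfl | hx0
    · rfl
    rcases parentMap_eq_or_of_adj (h ▸ hf.adj_parentMap hx0) with h' | h'
    · exact h'
    · rw [ih _ hx] at h'
      exact absurd h' (hf.iterate_ne_self hx0 two_pos)

theorem SimpleGraph.IsTree.exists_parentGraph_eq {t : SimpleGraph (Fin (n + 1))} (ht : t.IsTree) :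
    ∃ f : Fin n → Fin (n + 1), ReachesRoot f ∧ parentGraph f = t := by
  choose f hadj hdist using fun i : Fin n ↦ ht.connected.exists_adj_dist_lt (Fin.succ_ne_zero i)
  have hf : ReachesRoot f := Function.exists_iterate_eq_of_measure_lt (t.dist · 0) fun x hx ↦ by
    obtain ⟨i, rfl⟩ := Fin.exists_succ_eq.mpr hx
    exact hdist i
  have hle : parentGraph f ≤ t := (fromEdgeSet_le t).mpr <| by
    rintro _ ⟨⟨i, rfl⟩, -⟩
    exact hadj i
  have hge : t ≤ parentGraph f :=
    (isTree_iff_minimal_connected.mp ht).2 hf.connected_parentGraph hle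
  exact ⟨f, hf, le_antisymm hle hge⟩

end ParentGraph

theorem det_submatrix_lap_eq_sum {n : ℕ} (w : Fin (n + 1) → Fin (n + 1) → ℂ) :
    ((lap (n + 1) w).submatrix Fin.succ Fin.succ).det =
      ∑ f : Fin n → Fin (n + 1), (∏ i, w i.succ (f i)) * (1 - parentMatrix ℂ f).det := by
  have hrows : (lap (n + 1) w).submatrix Fin.succ Fin.succ =
      fun i ↦ ∑ k, w i.succ k • (Pi.single i 1 - fun j ↦ if k = j.succ then 1 else 0) := by
    ext i j
    by_cases hij : i = j
    · subst hij
      simp [lap, Finset.sum_erase_eq_sub, mul_sub]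
    · simp [lap, hij]
  rw [hrows]
  refine (Matrix.detRowAlternating.toMultilinearMap.map_sum _).trans (sum_congr rfl fun f _ ↦ ?_)
  rw [← Matrix.det_mul_column]
  refine congrArg Matrix.det (Matrix.ext fun i j ↦ ?_)
  simp [parentMatrix, Matrix.one_apply, Pi.single_apply, mul_sub, eq_comm]

theorem sum_reachesRoot_eq_treePoly {n : ℕ} (w : Fin (n + 1) → Fin (n + 1) → ℂ)
    (hw : ∀ i j, w i j = w j i) [DecidablePred (ReachesRoot (n := n))] :
    ∑ f with ReachesRoot f, ∏ i, w i.succ (f i) = treePoly (n + 1) w := by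
  classical
  rw [treePoly]
  refine sum_nbij parentGraph ?_ ?_ ?_ ?_
  · intro f hf
    simpa using (mem_filter.mp hf).2.isTree_parentGraph
  · intro f hf f' _ h
    exact (mem_filter.mp hf).2.eq_of_parentGraph_eq h
  · intro t ht
    obtain ⟨f, hf, rfl⟩ := (mem_filter.mp ht).2.exists_parentGraph_eq
    exact ⟨f, by simpa using hf, rfl⟩
  · intro f hf
    rw [SimpleGraph.prod_filter_lt_adj_eq_prod_edgeFinset w hw,
      (mem_filter.mp hf).2.prod_edgeFinset_parentGraph w hw]

/-- Weighted matrix-tree theorem: the principal minor of the weighted Laplacian of `Kₙ`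
obtained by deleting the first row and column equals the spanning-tree polynomial. -/
theorem det_submatrix_lap_eq_treePoly (n : ℕ) (w : Fin (n + 1) → Fin (n + 1) → ℂ)
    (hw : ∀ i j, w i j = w j i) :
    ((lap (n + 1) w).submatrix Fin.succ Fin.succ).det = treePoly (n + 1) w := by
  classical
  rw [det_submatrix_lap_eq_sum, ← sum_reachesRoot_eq_treePoly w hw, sum_filter]
  simp_rw [det_one_sub_parentMatrix, mul_ite, mul_one, mul_zero]
end

section
/- Let t be a labeled tree on vertex set {1,...,n}. Then for every permutation π of the edges of t, the product of the transpositions corresponding to the edges of t taken in the order π is an n-cycle in Sₙ. -/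
/-!
Multiplying a permutation `σ` by the transposition `(x y)` merges the cycles of `x` and `y`
when they are different. Take the edges in the given order; the last edge `{x, y}` is a bridge
of the tree, so `x` and `y` lie in different components of the forest spanned by the earlier
edges. A product of transpositions along edges of a graph moves each vertex only within its
component, so `x` and `y` lie in different cycles of the product of the earlier transpositions,
and the last transposition merges them. By induction, the endpoints of every edge lie in a
common cycle of the full product, hence so do any two vertices of the connected tree.
-/

open Finset Equiv

/-- The ordered product `τ_m ⋯ τ_1` of a sequence of permutations. -/
def prodRev {n m : ℕ} (τ : Fin m → Equiv.Perm (Fin n)) : Equiv.Perm (Fin n) :=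
  (List.ofFn τ).reverse.prod

/-- `σ` is an `n`-cycle of `Sₙ`. -/
def IsNCycle {n : ℕ} (σ : Equiv.Perm (Fin n)) : Prop :=
  σ.IsCycle ∧ σ.support = univ

/-- The transposition associated to an unordered pair. -/
def sym2Swap {n : ℕ} : Sym2 (Fin n) → Equiv.Perm (Fin n) :=
  Sym2.lift ⟨fun a b => Equiv.swap a b, fun a b => Equiv.swap_comm a b⟩

namespace Equiv.Perm

variable {α : Type*}

theorem SameCycle.rel_of_forall_apply {f : Perm α} {r : α → α → Prop} (hr : Equivalence r)
    (hf : ∀ c, r c (f c)) {a b : α} (h : f.SameCycle a b) : r a b := by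
  obtain ⟨k, rfl⟩ := h
  induction k using Int.induction_on with
  | zero => exact hr.refl a
  | succ k ih => rw [add_comm, zpow_one_add, mul_apply]; exact hr.trans ih (hf _)
  | pred k ih =>
    rw [sub_eq_neg_add, zpow_add, zpow_neg_one, mul_apply]
    have h := hf (f⁻¹ ((f ^ (-(k : ℤ))) a))
    rw [coe_inv, apply_symm_apply] at h
    exact hr.trans ih (hr.symm h)

variable [DecidableEq α] {σ : Perm α} {x y : α}

theorem sameCycle_swap_mul_pow_apply (hxy : ¬σ.SameCycle x y) (i : ℕ) :
    (swap x y * σ).SameCycle y ((σ ^ i) y) := by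
  induction i with
  | zero => exact SameCycle.rfl
  | succ i ih =>
    rw [pow_succ', mul_apply]
    by_cases hy : σ ((σ ^ i) y) = y
    · rw [hy]
    have hx : σ ((σ ^ i) y) ≠ x := fun hx =>
      hxy (hx ▸ (sameCycle_apply_right.2 (sameCycle_pow_right.2 SameCycle.rfl))).symm
    have hτ : (swap x y * σ) ((σ ^ i) y) = σ ((σ ^ i) y) := by
      rw [mul_apply, swap_apply_of_ne_of_ne hx hy]
    exact hτ ▸ ih.trans (sameCycle_apply_right.2 SameCycle.rfl)

variable [Finite α]

/-- Running along the `σ`-cycle of `y`, the product `swap x y * σ` agrees with `σ` until it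
reaches `σ⁻¹ y`, which it sends to `x` instead of `y`. -/
theorem sameCycle_swap_mul_of_not_sameCycle (hxy : ¬σ.SameCycle x y) :
    (swap x y * σ).SameCycle x y := by
  obtain ⟨i, hi⟩ := (sameCycle_symm_apply_right.2 (SameCycle.refl σ y)).exists_nat_pow_eq
  have hlast : (swap x y * σ) (σ.symm y) = x := by
    rw [mul_apply, apply_symm_apply, swap_apply_right]
  have h := sameCycle_swap_mul_pow_apply hxy i
  rw [hi] at h
  exact (hlast ▸ sameCycle_apply_right.2 h).symm

theorem SameCycle.swap_mul_of_not_sameCycle (hxy : ¬σ.SameCycle x y) {a b : α}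
    (h : σ.SameCycle a b) : (swap x y * σ).SameCycle a b := by
  have hmerge := sameCycle_swap_mul_of_not_sameCycle hxy
  refine h.rel_of_forall_apply (SameCycle.equivalence _) fun c => ?_
  have hc : (swap x y * σ).SameCycle c ((swap x y * σ) c) := sameCycle_apply_right.2 .rfl
  rw [mul_apply] at hc
  rcases eq_or_ne (σ c) x with hcx | hcx
  · rw [hcx, swap_apply_left] at hc
    rw [hcx]
    exact hc.trans hmerge.symm
  rcases eq_or_ne (σ c) y with hcy | hcy
  · rw [hcy, swap_apply_right] at hc
    rw [hcy]
    exact hc.trans hmerge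
  · rwa [swap_apply_of_ne_of_ne hcx hcy] at hc

end Equiv.Perm

namespace SimpleGraph

open Equiv.Perm

variable {n : ℕ} {G : SimpleGraph (Fin n)}

theorem reachable_sym2Swap_apply {e : Sym2 (Fin n)} (he : e ∈ G.edgeSet) (c : Fin n) :
    G.Reachable c (sym2Swap e c) := by
  induction e using Sym2.ind with
  | h x y =>
    have hxy : G.Adj x y := he
    change G.Reachable c (swap x y c)
    rw [swap_apply_def]
    split_ifs with hx hy
    · exact hx ▸ hxy.reachable
    · exact hy ▸ hxy.symm.reachable
    · rfl

theorem reachable_prod_map_sym2Swap_apply {L : List (Sym2 (Fin n))}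
    (hL : ∀ e ∈ L, e ∈ G.edgeSet) (c : Fin n) : G.Reachable c ((L.map sym2Swap).prod c) := by
  induction L generalizing c with
  | nil => rfl
  | cons e L ih =>
    rw [List.map_cons, List.prod_cons, mul_apply]
    exact (ih (fun e he => hL e (List.mem_cons_of_mem _ he)) c).trans
      (reachable_sym2Swap_apply (hL e List.mem_cons_self) _)

theorem not_sameCycle_prod_map_sym2Swap_of_isBridge {L : List (Sym2 (Fin n))} {x y : Fin n}
    (hL : ∀ e ∈ L, e ∈ G.edgeSet) (hxy : s(x, y) ∉ L) (hb : G.IsBridge s(x, y)) :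
    ¬(L.map sym2Swap).prod.SameCycle x y := fun h =>
  hb <| h.rel_of_forall_apply (reachable_is_equivalence _) <|
    reachable_prod_map_sym2Swap_apply fun e he =>
      (edgeSet_deleteEdges _).symm ▸ ⟨hL e he, fun he' => hxy (he' ▸ he)⟩

theorem IsAcyclic.sameCycle_prod_map_sym2Swap (hG : G.IsAcyclic) {L : List (Sym2 (Fin n))}
    (hL : ∀ e ∈ L, e ∈ G.edgeSet) (hnd : L.Nodup) {x y : Fin n} (hxy : s(x, y) ∈ L) :
    (L.map sym2Swap).prod.SameCycle x y := by
  induction L with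
  | nil => simp at hxy
  | cons e L ih =>
    induction e using Sym2.ind with
    | h u v =>
      have hL' : ∀ e ∈ L, e ∈ G.edgeSet := fun e he => hL e (List.mem_cons_of_mem _ he)
      have huv : s(u, v) ∉ L := (List.nodup_cons.1 hnd).1
      have hsplit := not_sameCycle_prod_map_sym2Swap_of_isBridge hL' huv
        (isAcyclic_iff_forall_isBridge.1 hG (hL _ List.mem_cons_self))
      rw [List.map_cons, List.prod_cons]
      rcases List.mem_cons.1 hxy with he | he
      · rcases Sym2.eq_iff.1 he with ⟨rfl, rfl⟩ | ⟨rfl, rfl⟩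
        · exact sameCycle_swap_mul_of_not_sameCycle hsplit
        · exact (sameCycle_swap_mul_of_not_sameCycle hsplit).symm
      · exact (ih hL' (List.nodup_cons.1 hnd).2 he).swap_mul_of_not_sameCycle hsplit

end SimpleGraph

theorem isNCycle_of_forall_sameCycle {n : ℕ} (hn : 2 ≤ n) {σ : Perm (Fin n)}
    (h : ∀ a b, σ.SameCycle a b) : IsNCycle σ := by
  have hcyc : σ.IsCycleOn Set.univ := ⟨Set.bijOn_univ.2 σ.bijective, fun a _ b _ => h a b⟩
  have hnt : (Set.univ : Set (Fin n)).Nontrivial :=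
    Set.nontrivial_univ_iff.2 (Fin.nontrivial_iff_two_le.2 hn)
  refine ⟨Perm.isCycle_iff_exists_isCycleOn.2 ⟨_, hnt, hcyc, fun a _ => Set.mem_univ a⟩, ?_⟩
  exact eq_univ_of_forall fun a => Perm.mem_support.2 (hcyc.apply_ne hnt (Set.mem_univ a))

/-- For a labeled tree `t` on `{1,…,n}`, the product of the transpositions corresponding to
the edges of `t`, taken in **any** order (encoded by an arbitrary injective enumeration `f` of
the edges of `t`), is an `n`-cycle. -/
theorem tree_product_isNCycle (n : ℕ) (hn : 2 ≤ n) (t : SimpleGraph (Fin n)) (ht : t.IsTree)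
    (f : Fin (n - 1) → Sym2 (Fin n)) (hinj : Function.Injective f)
    (hrange : ∀ e, e ∈ t.edgeSet ↔ ∃ i, f i = e) :
    IsNCycle (prodRev fun i => sym2Swap (f i)) := by
  set L := (List.ofFn f).reverse
  have hprod : (prodRev fun i => sym2Swap (f i)) = (L.map sym2Swap).prod := by
    simp only [prodRev, L, List.map_reverse, List.map_ofFn, Function.comp_def]
  have hmem : ∀ e ∈ L, e ∈ t.edgeSet := fun e he =>
    (hrange e).2 (List.mem_ofFn.1 (List.mem_reverse.1 he))
  have hnd : L.Nodup := List.nodup_reverse.2 (List.nodup_ofFn.2 hinj)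
  have hadj : ∀ u v, t.Adj u v → (L.map sym2Swap).prod.SameCycle u v := fun u v huv =>
    ht.isAcyclic.sameCycle_prod_map_sym2Swap hmem hnd <| by
      obtain ⟨i, hi⟩ := (hrange s(u, v)).1 huv
      exact List.mem_reverse.2 (hi ▸ List.mem_ofFn.2 ⟨i, rfl⟩)
  rw [hprod]
  refine isNCycle_of_forall_sameCycle hn fun u v => ?_
  induction (t.reachable_iff_reflTransGen u v).1 (ht.connected.preconnected u v) with
  | refl => rfl
  | tail _ hvw ih => exact ih.trans (hadj _ _ hvw)
end

section
/- Let X_{2g} denote the (2g)-spider: the tree with one central vertex of valency 2g and 2g leaves. In the 'graph algebra' W spanned by isomorphism classes of loopless graphs (product given by superimposing on labeled vertices), modulo the ideal N spanned by all non-spider graphs, the 2g-th power of the single edge satisfies: (single edge)^{2g} ≡ (2g)!·X_{2g} mod N; consequently the coefficient of X_{2g} in Σ_g R_g = φ(single edge) mod N equals 1/(2^{2g}(2g+1)), where φ(t) = sinh(t/2)/(t/2). -/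
open Finset MvPolynomial

/-- A monomial in edge variables is a *spider* monomial if it is nonempty, squarefree, and
all its edges are non-loops sharing a common center vertex. -/
def IsSpider {n : ℕ} (d : Sym2 (Fin n) →₀ ℕ) : Prop :=
  d ≠ 0 ∧ ∃ c : Fin n, ∀ e ∈ d.support, d e = 1 ∧ c ∈ e ∧ ¬e.IsDiag

/-- The span of all non-spider graph monomials (the ideal `N`). -/
noncomputable def nonSpiderSpan (n : ℕ) : Submodule ℚ (MvPolynomial (Sym2 (Fin n)) ℚ) :=
  Submodule.span ℚ {q | ∃ d, ¬IsSpider d ∧ q = monomial d (1 : ℚ)}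

/-- The single-edge element `Σ_{i<j} w_{ij}`. -/
noncomputable def edgePoly (n : ℕ) : MvPolynomial (Sym2 (Fin n)) ℚ :=
  ∑ e ∈ univ.filter (fun e : Sym2 (Fin n) => ¬e.IsDiag), X e

/-- The `2g`-spider element `X_{2g}` (sum over a center and `2g` distinct leaves). -/
noncomputable def spiderPoly (n g : ℕ) : MvPolynomial (Sym2 (Fin n)) ℚ :=
  ∑ c : Fin n, ∑ S ∈ Finset.powersetCard (2 * g) ((univ : Finset (Fin n)).erase c),
    ∏ v ∈ S, X s(c, v)

noncomputable def ind {n : ℕ} (T : Finset (Sym2 (Fin n))) : Sym2 (Fin n) →₀ ℕ :=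
  ∑ e ∈ T, Finsupp.single e 1

lemma ind_apply {n : ℕ} (T : Finset (Sym2 (Fin n))) (e : Sym2 (Fin n)) :
    ind T e = if e ∈ T then 1 else 0 := by
  classical
  rw [ind, Finsupp.finset_sum_apply]
  simp_rw [Finsupp.single_apply]
  simp

lemma ind_support {n : ℕ} (T : Finset (Sym2 (Fin n))) : (ind T).support = T := by
  ext e
  rw [Finsupp.mem_support_iff, ind_apply]
  split <;> simp_all

lemma monomial_ind {n : ℕ} (T : Finset (Sym2 (Fin n))) :
    (monomial (ind T) (1 : ℚ)) = ∏ e ∈ T, X e := by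
  rw [← prod_X_pow_eq_monomial, ind_support]
  exact Finset.prod_congr rfl fun e he => by rw [ind_apply, if_pos he, pow_one]

lemma mk_left_inj {n : ℕ} {c a b : Fin n} (ha : a ≠ c) (h : s(c, a) = s(c, b)) : a = b := by
  rw [Sym2.eq_iff] at h
  rcases h with ⟨-, h⟩ | ⟨h1, h2⟩
  · exact h
  · exact absurd h2 ha

lemma ind_support_eq {n : ℕ} {K : Sym2 (Fin n) →₀ ℕ}
    (h1 : ∀ e ∈ K.support, K e = 1) : ind K.support = K := by
  ext e
  rw [ind_apply]
  by_cases he : e ∈ K.support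
  · rw [if_pos he, h1 e he]
  · rw [if_neg he, (Finsupp.notMem_support_iff).mp he]

lemma spider_sum (n g : ℕ) (hg : 1 ≤ g)
    [DecidablePred (fun k : Sym2 (Fin n) → ℕ => IsSpider (Finsupp.equivFunOnFinite.symm k))] :
    ∑ k ∈ (Finset.piAntidiag ((univ : Finset (Sym2 (Fin n))).filter fun e => ¬e.IsDiag)
        (2 * g)).filter (fun k => IsSpider (Finsupp.equivFunOnFinite.symm k)),
      monomial (Finsupp.equivFunOnFinite.symm k) (1 : ℚ) = spiderPoly n g := by
  classical
  rw [spiderPoly, Finset.sum_sigma']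
  symm
  apply Finset.sum_bij (i := fun p _ => ⇑(ind (p.2.image (fun v => s(p.1, v)))))
  · -- maps into target
    rintro ⟨c, S⟩ hp
    rw [Finset.mem_sigma, Finset.mem_powersetCard] at hp
    obtain ⟨-, hsub, hcard⟩ := hp
    have hvc : ∀ v ∈ S, v ≠ c := fun v hv => (Finset.mem_erase.mp (hsub hv)).1
    set T := S.image (fun v => s(c, v)) with hT
    have hinj : Set.InjOn (fun v => s(c, v)) S := fun a ha b hb h =>
      mk_left_inj (hvc a ha) h
    have hTcard : T.card = 2 * g := by
      rw [hT, Finset.card_image_of_injOn hinj, hcard]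
    have hTE : T ⊆ (univ : Finset (Sym2 (Fin n))).filter fun e => ¬e.IsDiag := by
      intro e he
      rw [hT, Finset.mem_image] at he
      obtain ⟨v, hv, rfl⟩ := he
      simp [Sym2.mk_isDiag_iff, (hvc v hv).symm, Ne.symm (hvc v hv)]
    rw [Finset.mem_filter, Finset.mem_piAntidiag]
    refine ⟨⟨?_, ?_⟩, ?_⟩
    · rw [← Finset.sum_subset hTE (fun e _ he => by rw [ind_apply, if_neg he])]
      rw [Finset.sum_congr rfl fun e he => by rw [ind_apply, if_pos he]]
      simp [hTcard]
    · intro e he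
      rw [ind_apply] at he
      by_cases h : e ∈ T
      · exact hTE h
      · simp [h] at he
    · rw [Finsupp.equivFunOnFinite_symm_coe]
      refine ⟨?_, c, ?_⟩
      · intro h0
        have : (ind T).support = ∅ := by rw [h0]; simp
        rw [ind_support] at this
        rw [this] at hTcard
        simp at hTcard
        omega
      · intro e he
        rw [ind_support, hT, Finset.mem_image] at he
        obtain ⟨v, hv, rfl⟩ := he
        refine ⟨?_, Sym2.mem_mk_left c v, by simp [Sym2.mk_isDiag_iff, Ne.symm (hvc v hv)]⟩
        rw [ind_apply, if_pos]
        rw [hT, Finset.mem_image]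
        exact ⟨v, hv, rfl⟩
  · -- injective
    rintro ⟨c, S⟩ hp ⟨c', S'⟩ hp' heq
    rw [Finset.mem_sigma, Finset.mem_powersetCard] at hp hp'
    obtain ⟨-, hsub, hcard⟩ := hp
    obtain ⟨-, hsub', hcard'⟩ := hp'
    have hvc : ∀ v ∈ S, v ≠ c := fun v hv => (Finset.mem_erase.mp (hsub hv)).1
    have hvc' : ∀ v ∈ S', v ≠ c' := fun v hv => (Finset.mem_erase.mp (hsub' hv)).1
    have hind : ind (S.image (fun v => s(c, v))) = ind (S'.image (fun v => s(c', v))) :=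
      DFunLike.coe_injective heq
    have hTT : S.image (fun v => s(c, v)) = S'.image (fun v => s(c', v)) := by
      rw [← ind_support (S.image (fun v => s(c, v))), hind, ind_support]
    have hcc : c = c' := by
      by_contra hne
      -- S has at least two elements
      have h2 : 1 < S.card := by rw [hcard]; omega
      obtain ⟨v, hv, w, hw, hvw⟩ := Finset.one_lt_card.mp h2
      have hmem : ∀ u ∈ S, c' = u := by
        intro u hu
        have : s(c, u) ∈ S'.image (fun v => s(c', v)) := by
          rw [← hTT]; exact Finset.mem_image_of_mem _ hu
        rw [Finset.mem_image] at this
        obtain ⟨u', _, hu'⟩ := this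
        have : c' ∈ s(c, u) := hu' ▸ Sym2.mem_mk_left c' u'
        rcases Sym2.mem_iff.mp this with h | h
        · exact absurd h.symm hne
        · exact h
      exact hvw ((hmem v hv).symm.trans (hmem w hw))
    subst hcc
    have hSS : S = S' := by
      ext v
      constructor
      · intro hv
        have : s(c, v) ∈ S'.image (fun u => s(c, u)) := by
          rw [← hTT]; exact Finset.mem_image_of_mem _ hv
        rw [Finset.mem_image] at this
        obtain ⟨u, hu, huv⟩ := this
        rwa [mk_left_inj (hvc' u hu) huv] at hu
      · intro hv
        have : s(c, v) ∈ S.image (fun u => s(c, u)) := by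
          rw [hTT]; exact Finset.mem_image_of_mem _ hv
        rw [Finset.mem_image] at this
        obtain ⟨u, hu, huv⟩ := this
        rwa [mk_left_inj (hvc u hu) huv] at hu
    subst hSS
    rfl
  · -- surjective
    intro k hk
    rw [Finset.mem_filter, Finset.mem_piAntidiag] at hk
    obtain ⟨⟨hsum, hsupp⟩, hne0, c, hc⟩ := hk
    set K : Sym2 (Fin n) →₀ ℕ := Finsupp.equivFunOnFinite.symm k with hK
    have hcoe : ⇑K = k := rfl
    -- values on support
    have h1 : ∀ e ∈ K.support, K e = 1 := fun e he => (hc e he).1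
    have hce : ∀ e ∈ K.support, c ∈ e := fun e he => (hc e he).2.1
    have hdiag : ∀ e ∈ K.support, ¬e.IsDiag := fun e he => (hc e he).2.2
    let f : Sym2 (Fin n) → Fin n := fun e => if h : c ∈ e then Sym2.Mem.other h else c
    have hf : ∀ e ∈ K.support, s(c, f e) = e := by
      intro e he
      simp only [f, dif_pos (hce e he)]
      exact Sym2.other_spec (hce e he)
    have hfne : ∀ e ∈ K.support, f e ≠ c := by
      intro e he
      simp only [f, dif_pos (hce e he)]
      exact Sym2.other_ne (hdiag e he) (hce e he)
    have hfinj : Set.InjOn f K.support := by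
      intro e he e' he' h
      rw [← hf e he, ← hf e' he', h]
    refine ⟨⟨c, K.support.image f⟩, ?_, ?_⟩
    · rw [Finset.mem_sigma, Finset.mem_powersetCard]
      refine ⟨Finset.mem_univ c, ?_, ?_⟩
      · intro v hv
        rw [Finset.mem_image] at hv
        obtain ⟨e, he, rfl⟩ := hv
        exact Finset.mem_erase.mpr ⟨hfne e he, Finset.mem_univ _⟩
      · rw [Finset.card_image_of_injOn hfinj]
        -- card of support = 2g
        have hsubE : K.support ⊆ (univ : Finset (Sym2 (Fin n))).filter fun e => ¬e.IsDiag := by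
          intro e he
          exact hsupp e (Finsupp.mem_support_iff.mp he)
        have h2 : ∑ e ∈ K.support, K e = 2 * g := by
          rw [Finset.sum_subset hsubE (fun e _ he => Finsupp.notMem_support_iff.mp he)]
          exact hsum
        rw [← h2, Finset.sum_congr rfl h1]
        simp
    · -- i applied gives back k
      dsimp only
      have himg : (K.support.image f).image (fun v => s(c, v)) = K.support := by
        rw [Finset.image_image]
        rw [show ((fun v => s(c, v)) ∘ f) = fun e => s(c, f e) from rfl]
        calc K.support.image (fun e => s(c, f e))
            = K.support.image id := Finset.image_congr fun e he => hf e he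
          _ = K.support := Finset.image_id
      rw [himg, ind_support_eq h1, hcoe]
  · -- values
    rintro ⟨c, S⟩ hp
    rw [Finset.mem_sigma, Finset.mem_powersetCard] at hp
    obtain ⟨-, hsub, hcard⟩ := hp
    have hvc : ∀ v ∈ S, v ≠ c := fun v hv => (Finset.mem_erase.mp (hsub hv)).1
    have hinj : Set.InjOn (fun v => s(c, v)) S := fun a ha b hb h => mk_left_inj (hvc a ha) h
    rw [Finsupp.equivFunOnFinite_symm_coe, monomial_ind, Finset.prod_image hinj]


/-- Modulo the span `N` of non-spider graphs, `(single edge)^{2g} ≡ (2g)!·X_{2g}`;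
consequently the `X_{2g}`-term of `φ(single edge)`, where `φ(t) = sinh(t/2)/(t/2)`, i.e. of
`(1/(2^{2g}(2g+1)!))·(single edge)^{2g}`, is `(1/(2^{2g}(2g+1)))·X_{2g}`. -/
theorem edge_power_mod_nonspiders (n g : ℕ) (hg : 1 ≤ g) (hn : 2 * g + 1 ≤ n) :
    (edgePoly n ^ (2 * g) - (2 * g).factorial • spiderPoly n g ∈ nonSpiderSpan n)
    ∧ ((1 / (2 ^ (2 * g) * ((2 * g + 1).factorial : ℚ))) • edgePoly n ^ (2 * g)
        - (1 / (2 ^ (2 * g) * (2 * g + 1 : ℚ))) • spiderPoly n g ∈ nonSpiderSpan n) := by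
  classical
  set E := (univ : Finset (Sym2 (Fin n))).filter (fun e => ¬e.IsDiag) with hE
  have hexp : edgePoly n ^ (2 * g) =
      ∑ k ∈ Finset.piAntidiag E (2 * g), (Nat.multinomial E k : MvPolynomial (Sym2 (Fin n)) ℚ) *
        monomial (Finsupp.equivFunOnFinite.symm k) 1 := by
    rw [edgePoly, Finset.sum_pow_eq_sum_piAntidiag]
    refine Finset.sum_congr rfl fun k hk => ?_
    congr 1
    rw [← prod_X_pow_eq_monomial]
    refine (Finset.prod_subset ?_ ?_).symm
    · intro e he
      rw [Finset.mem_piAntidiag] at hk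
      exact hk.2 e (Finsupp.mem_support_iff.mp he)
    · intro e _ he
      have hz : k e = 0 := Finsupp.notMem_support_iff.mp he
      rw [hz, pow_zero]
  have hmult : ∀ k ∈ (Finset.piAntidiag E (2 * g)).filter
      (fun k => IsSpider (Finsupp.equivFunOnFinite.symm k)),
      Nat.multinomial E k = (2 * g).factorial := by
    intro k hk
    rw [Finset.mem_filter, Finset.mem_piAntidiag] at hk
    obtain ⟨⟨hsum, -⟩, -, c, hc⟩ := hk
    have hval : ∀ e, Nat.factorial (k e) = 1 := by
      intro e
      by_cases he : e ∈ (Finsupp.equivFunOnFinite.symm k).support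
      · rw [show k e = (Finsupp.equivFunOnFinite.symm k) e from rfl, (hc e he).1,
          Nat.factorial_one]
      · rw [show k e = (Finsupp.equivFunOnFinite.symm k) e from rfl,
          Finsupp.notMem_support_iff.mp he, Nat.factorial_zero]
    have hspec := Nat.multinomial_spec E k
    rwa [Finset.prod_eq_one (fun e _ => hval e), one_mul, hsum] at hspec
  have key : edgePoly n ^ (2 * g) - (2 * g).factorial • spiderPoly n g ∈ nonSpiderSpan n := by
    rw [hexp, ← Finset.sum_filter_add_sum_filter_not (Finset.piAntidiag E (2 * g))
      (fun k => IsSpider (Finsupp.equivFunOnFinite.symm k))]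
    have hspid : (∑ k ∈ (Finset.piAntidiag E (2 * g)).filter
        (fun k => IsSpider (Finsupp.equivFunOnFinite.symm k)),
        (Nat.multinomial E k : MvPolynomial (Sym2 (Fin n)) ℚ) *
          monomial (Finsupp.equivFunOnFinite.symm k) 1)
        = (2 * g).factorial • spiderPoly n g := by
      have hcg : ∀ k ∈ (Finset.piAntidiag E (2 * g)).filter
          (fun k => IsSpider (Finsupp.equivFunOnFinite.symm k)),
          (Nat.multinomial E k : MvPolynomial (Sym2 (Fin n)) ℚ) *
            monomial (Finsupp.equivFunOnFinite.symm k) 1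
          = (2 * g).factorial • monomial (Finsupp.equivFunOnFinite.symm k) (1 : ℚ) :=
        fun k hk => by rw [hmult k hk, nsmul_eq_mul]
      rw [Finset.sum_congr rfl hcg, ← Finset.smul_sum, spider_sum n g hg]
    rw [hspid, add_sub_cancel_left]
    refine Submodule.sum_mem _ fun k hk => ?_
    rw [Finset.mem_filter] at hk
    rw [← nsmul_eq_mul]
    refine nsmul_mem (Submodule.subset_span ?_) _
    exact ⟨_, hk.2, rfl⟩
  refine ⟨key, ?_⟩
  have h2 := Submodule.smul_mem (nonSpiderSpan n)
    ((1 : ℚ) / (2 ^ (2 * g) * ((2 * g + 1).factorial : ℚ))) key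
  rw [smul_sub] at h2
  have h3 : (1 / (2 ^ (2 * g) * ((2 * g + 1).factorial : ℚ))) •
      ((2 * g).factorial • spiderPoly n g)
      = (1 / (2 ^ (2 * g) * (2 * g + 1 : ℚ))) • spiderPoly n g := by
    rw [← Nat.cast_smul_eq_nsmul ℚ, smul_smul]
    congr 1
    have hfac : (((2 * g + 1).factorial : ℚ)) = (2 * g + 1 : ℚ) * ((2 * g).factorial : ℚ) := by
      rw [Nat.factorial_succ]
      push_cast
      ring
    have hne1 : ((2 : ℚ)) ^ (2 * g) ≠ 0 := by positivity
    have hne2 : (((2 * g).factorial : ℚ)) ≠ 0 := by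
      exact_mod_cast Nat.cast_ne_zero.mpr (Nat.factorial_ne_zero _)
    have hne3 : ((2 * g + 1 : ℚ)) ≠ 0 := by positivity
    rw [hfac]
    field_simp
  rwa [h3] at h2
end
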